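/- arXiv:2110.02499 — 2 statements merged into one kernel-verified Lean document; each statement's English description precedes it below -/
import Mathlib

section
/- For every bounded linear operator A on a complex Hilbert space, (1/2)‖Re(A) − Im(A)‖² ≤ w²(A) and (1/2)‖Re(A) + Im(A)‖² ≤ w²(A). -/
open scoped InnerProductSpace
open ContinuousLinearMap

/-- The numerical radius of a bounded linear operator. -/
noncomputable def numRadius {H : Type*} [NormedAddCommGroup H] [InnerProductSpace ℂ H]
    (A : H →L[ℂ] H) : ℝ :=
  sSup {r : ℝ | ∃ x : H, ‖x‖ = 1 ∧ r = ‖⟪A x, x⟫_ℂ‖}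

/-- The Crawford number of a bounded linear operator. -/
noncomputable def crawford {H : Type*} [NormedAddCommGroup H] [InnerProductSpace ℂ H]
    (A : H →L[ℂ] H) : ℝ :=
  sInf {r : ℝ | ∃ x : H, ‖x‖ = 1 ∧ r = ‖⟪A x, x⟫_ℂ‖}

/-- The real part of a bounded linear operator. -/
noncomputable def reP {H : Type*} [NormedAddCommGroup H] [InnerProductSpace ℂ H]
    [CompleteSpace H] (A : H →L[ℂ] H) : H →L[ℂ] H :=
  ((2 : ℂ)⁻¹) • (A + adjoint A)

/-- The imaginary part of a bounded linear operator. -/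
noncomputable def imP {H : Type*} [NormedAddCommGroup H] [InnerProductSpace ℂ H]
    [CompleteSpace H] (A : H →L[ℂ] H) : H →L[ℂ] H :=
  ((2 * Complex.I)⁻¹) • (A - adjoint A)

/-! For a symmetric operator `B`, `‖B‖` is the supremum of `|re ⟪B x, x⟫|` over unit vectors.
With `z = ⟪A x, x⟫`, the quadratic form of `Re A ∓ Im A` is `re z ± im z`, and
`|re z ± im z| ≤ √2 ‖z‖ ≤ √2 w(A)` on the unit sphere, so `‖Re A ∓ Im A‖ ≤ √2 w(A)`. -/

theorem LinearMap.IsSymmetric.opNorm_le_of_abs_re_inner_le {𝕜 E : Type*} [RCLike 𝕜]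
    [NormedAddCommGroup E] [InnerProductSpace 𝕜 E] {T : E →L[𝕜] E} (hT : T.IsSymmetric)
    {C : ℝ} (hC : 0 ≤ C) (h : ∀ x, |RCLike.re ⟪T x, x⟫_𝕜| ≤ C * ‖x‖ ^ 2) : ‖T‖ ≤ C := by
  rw [T.norm_eq_iSup_rayleighQuotient hT]
  refine ciSup_le fun x => ?_
  rw [rayleighQuotient, reApplyInnerSelf_apply, abs_div, abs_sq]
  exact div_le_of_le_mul₀ (sq_nonneg _) hC (h x)

theorem Complex.abs_re_add_mul_im_le (z : ℂ) (t : ℝ) :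
    |z.re + t * z.im| ≤ √(1 + t ^ 2) * ‖z‖ := by
  rw [← Real.sqrt_sq_eq_abs, Complex.norm_eq_sqrt_sq_add_sq, ← Real.sqrt_mul (by positivity)]
  gcongr
  nlinarith [sq_nonneg (t * z.re - z.im)]

section NumericalRadius

variable {H : Type*} [NormedAddCommGroup H] [InnerProductSpace ℂ H]

theorem numRadius_nonneg (A : H →L[ℂ] H) : 0 ≤ numRadius A :=
  Real.sSup_nonneg fun _ ⟨_, _, hr⟩ => hr ▸ norm_nonneg _

theorem bddAbove_norm_inner_apply_self_sphere (A : H →L[ℂ] H) :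
    BddAbove {r : ℝ | ∃ x : H, ‖x‖ = 1 ∧ r = ‖⟪A x, x⟫_ℂ‖} := by
  refine ⟨‖A‖, ?_⟩
  rintro _ ⟨x, hx, rfl⟩
  calc ‖⟪A x, x⟫_ℂ‖ ≤ ‖A x‖ * ‖x‖ := norm_inner_le_norm _ _
    _ ≤ ‖A‖ * ‖x‖ * ‖x‖ := by gcongr; exact A.le_opNorm x
    _ = ‖A‖ := by rw [hx, mul_one, mul_one]

theorem norm_inner_apply_self_le_numRadius_mul (A : H →L[ℂ] H) (x : H) :
    ‖⟪A x, x⟫_ℂ‖ ≤ numRadius A * ‖x‖ ^ 2 := by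
  rcases eq_or_ne x 0 with rfl | hx
  · simp
  have hu := le_csSup (bddAbove_norm_inner_apply_self_sphere A)
    ⟨(‖x‖⁻¹ : ℂ) • x, norm_smul_inv_norm hx, rfl⟩
  have hscale : ‖⟪A ((‖x‖⁻¹ : ℂ) • x), (‖x‖⁻¹ : ℂ) • x⟫_ℂ‖ = ‖⟪A x, x⟫_ℂ‖ / ‖x‖ ^ 2 := by
    simp only [map_smul, inner_smul_left, inner_smul_right, map_inv₀, Complex.conj_ofReal, norm_mul,
      norm_inv, Complex.norm_real, norm_norm]
    field_simp
  rwa [hscale, div_le_iff₀ (by positivity)] at hu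

theorem norm_le_sqrt_mul_numRadius_of_re_inner_eq {A B : H →L[ℂ] H} (hB : B.IsSymmetric) (t : ℝ)
    (hBA : ∀ x, (⟪B x, x⟫_ℂ).re = (⟪A x, x⟫_ℂ).re + t * (⟪A x, x⟫_ℂ).im) :
    ‖B‖ ≤ √(1 + t ^ 2) * numRadius A := by
  refine hB.opNorm_le_of_abs_re_inner_le (by positivity [numRadius_nonneg A]) fun x => ?_
  calc |(⟪B x, x⟫_ℂ).re| ≤ √(1 + t ^ 2) * ‖⟪A x, x⟫_ℂ‖ := by
        rw [hBA]; exact Complex.abs_re_add_mul_im_le _ t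
    _ ≤ √(1 + t ^ 2) * (numRadius A * ‖x‖ ^ 2) := by
        gcongr; exact norm_inner_apply_self_le_numRadius_mul A x
    _ = √(1 + t ^ 2) * numRadius A * ‖x‖ ^ 2 := by ring

theorem half_mul_norm_sq_le_numRadius_sq_of_re_inner_eq {A B : H →L[ℂ] H}
    (hB : B.IsSymmetric) {t : ℝ} (ht : t ^ 2 = 1)
    (hBA : ∀ x, (⟪B x, x⟫_ℂ).re = (⟪A x, x⟫_ℂ).re + t * (⟪A x, x⟫_ℂ).im) :
    (1/2 : ℝ) * ‖B‖ ^ 2 ≤ numRadius A ^ 2 := by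
  have hB := norm_le_sqrt_mul_numRadius_of_re_inner_eq hB t hBA
  rw [ht, one_add_one_eq_two] at hB
  have := pow_le_pow_left₀ (norm_nonneg B) hB 2
  rw [mul_pow, Real.sq_sqrt zero_le_two] at this
  linarith

end NumericalRadius

section RealImaginaryParts

variable {H : Type*} [NormedAddCommGroup H] [InnerProductSpace ℂ H] [CompleteSpace H]

theorem isSelfAdjoint_reP (A : H →L[ℂ] H) : IsSelfAdjoint (reP A) := by
  rw [ContinuousLinearMap.isSelfAdjoint_iff', reP, map_smulₛₗ, map_add, adjoint_adjoint,
    map_inv₀, map_ofNat, add_comm]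

theorem isSelfAdjoint_imP (A : H →L[ℂ] H) : IsSelfAdjoint (imP A) := by
  rw [ContinuousLinearMap.isSelfAdjoint_iff', imP, map_smulₛₗ, map_sub, adjoint_adjoint,
    map_inv₀, map_mul, map_ofNat, Complex.conj_I, ← neg_sub, smul_neg, ← neg_smul, mul_neg,
    inv_neg, neg_neg]

theorem re_inner_reP_apply_self (A : H →L[ℂ] H) (x : H) :
    (⟪reP A x, x⟫_ℂ).re = (⟪A x, x⟫_ℂ).re := by
  have hsymm : (⟪x, A x⟫_ℂ).re = (⟪A x, x⟫_ℂ).re := inner_re_symm (𝕜 := ℂ) _ _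
  simp [reP, adjoint_inner_left, hsymm]
  ring

/- The sign comes from `⟪·, ·⟫_ℂ` being conjugate-linear in its first argument: `⟪A x, x⟫_ℂ` is
the conjugate of the paper's `⟨Ax, x⟩`. -/
theorem re_inner_imP_apply_self (A : H →L[ℂ] H) (x : H) :
    (⟪imP A x, x⟫_ℂ).re = -(⟪A x, x⟫_ℂ).im := by
  have hsymm : (⟪x, A x⟫_ℂ).im = -(⟪A x, x⟫_ℂ).im := inner_im_symm (𝕜 := ℂ) _ _
  simp only [imP, smul_apply, sub_apply, inner_smul_left, inner_sub_left, adjoint_inner_left]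
  simp [hsymm]
  ring

end RealImaginaryParts

theorem stmt7_general {H : Type*} [NormedAddCommGroup H] [InnerProductSpace ℂ H]
    [CompleteSpace H] (A : H →L[ℂ] H) :
    (1/2 : ℝ) * ‖reP A - imP A‖ ^ 2 ≤ numRadius A ^ 2 ∧
    (1/2 : ℝ) * ‖reP A + imP A‖ ^ 2 ≤ numRadius A ^ 2 := by
  have hre := re_inner_reP_apply_self A
  have him := re_inner_imP_apply_self A
  constructor
  · refine half_mul_norm_sq_le_numRadius_sq_of_re_inner_eq
      ((isSelfAdjoint_reP A).sub (isSelfAdjoint_imP A)).isSymmetric (t := 1) (one_pow 2)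
      fun x => ?_
    simp [hre, him]
  · refine half_mul_norm_sq_le_numRadius_sq_of_re_inner_eq
      ((isSelfAdjoint_reP A).add (isSelfAdjoint_imP A)).isSymmetric (t := -1) (by norm_num)
      fun x => ?_
    simp [hre, him]

theorem stmt7 {H : Type*} [NormedAddCommGroup H] [InnerProductSpace ℂ H]
    [CompleteSpace H] [Nontrivial H] (A : H →L[ℂ] H) :
    (1/2 : ℝ) * ‖reP A - imP A‖ ^ 2 ≤ numRadius A ^ 2 ∧
    (1/2 : ℝ) * ‖reP A + imP A‖ ^ 2 ≤ numRadius A ^ 2 :=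
  stmt7_general A
end

section
/- Let A be a bounded linear operator on a complex Hilbert space with w²(A) = (1/4)‖A*A + AA*‖. Then the Crawford numbers of Re(A) + Im(A) and of Re(A) − Im(A) are both zero; consequently there exists a sequence (xₙ) of unit vectors such that the limits limₙ |⟨Re(A)xₙ, xₙ⟩| and limₙ |⟨Im(A)xₙ, xₙ⟩| exist and are equal. -/
open scoped InnerProductSpace
open ContinuousLinearMap

/-!
Let `R = ℜ A`, `J = ℑ A`, `S = R + J`, `T = R - J`, all self-adjoint. If `⟪A x, x⟫ = a + b i`
then `⟪S x, x⟫ = a - b` and `⟪T x, x⟫ = a + b` are real, so on the unit sphere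
`|⟪S x, x⟫|² + |⟪T x, x⟫|² = 2 |⟪A x, x⟫|² ≤ 2 w(A)²`. As the norm of a self-adjoint operator is
its numerical radius, `‖S‖², ‖T‖² ≤ 2 w(A)²`; since `S² + T² = A*A + AA*`, the hypothesis gives
`4 w(A)² ≤ ‖S‖² + ‖T‖²`, so `‖S‖² = ‖T‖² = 2 w(A)²`. Now if `c(S) = c`, then
`|⟪T x, x⟫|² ≤ ‖T‖² - c²` on the unit sphere, whence `‖T‖² ≤ ‖T‖² - c²` and `c = 0`; likewise
`c(T) = 0`. Along unit vectors with `⟪S xₙ, xₙ⟫ → 0`, the moduli `|⟪R xₙ, xₙ⟫|` and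
`|⟪J xₙ, xₙ⟫|` are bounded and differ by at most `|⟪S xₙ, xₙ⟫|`, so any subsequence on which the
first converges will do.
-/

open Filter Topology
open scoped ComplexStarModule

theorem star_mul_self_add_self_mul_star_eq_add_mul_self_add_sub_mul_self {A : Type*}
    [NonUnitalNonAssocRing A] [StarRing A] [Module ℂ A] [IsScalarTower ℂ A A]
    [SMulCommClass ℂ A A] [StarModule ℂ A] (a : A) :
    star a * a + a * star a =
      (ℜ a + ℑ a : A) * (ℜ a + ℑ a) + (ℜ a - ℑ a : A) * (ℜ a - ℑ a) := by
  rw [star_mul_self_add_self_mul_star]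
  simp only [add_mul, mul_add, sub_mul, mul_sub, two_nsmul]
  abel

theorem Real.exists_tendsto_comp_of_abs_sub_le {f g e : ℕ → ℝ} {M : ℝ}
    (hf : ∀ n, |f n| ≤ M) (hfg : ∀ n, |f n - g n| ≤ e n) (he : Tendsto e atTop (𝓝 0)) :
    ∃ φ : ℕ → ℕ, ∃ L, Tendsto (f ∘ φ) atTop (𝓝 L) ∧ Tendsto (g ∘ φ) atTop (𝓝 L) := by
  obtain ⟨L, -, φ, hφ, hfL⟩ :=
    isCompact_Icc.tendsto_subseq (s := Set.Icc (-M) M) fun n ↦ abs_le.mp (hf n)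
  refine ⟨φ, L, hfL, hfL.congr_dist ?_⟩
  refine squeeze_zero (fun _ ↦ dist_nonneg) (fun n ↦ ?_) (he.comp hφ.tendsto_atTop)
  exact (Real.dist_eq _ _).trans_le (hfg (φ n))

section RCLike

variable {𝕜 E : Type*} [RCLike 𝕜] [NormedAddCommGroup E] [InnerProductSpace 𝕜 E]

theorem ContinuousLinearMap.norm_inner_apply_self_le (T : E →L[𝕜] E) {x : E} (hx : ‖x‖ = 1) :
    ‖⟪T x, x⟫_𝕜‖ ≤ ‖T‖ := by
  simpa [hx] using (norm_inner_le_norm (T x) x).trans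
    (mul_le_mul_of_nonneg_right (T.le_opNorm x) (norm_nonneg x))

theorem ContinuousLinearMap.opNorm_le_of_forall_norm_inner_le {T : E →L[𝕜] E}
    (hT : (T : E →ₗ[𝕜] E).IsSymmetric) {m : ℝ} (hm : 0 ≤ m)
    (h : ∀ x, ‖x‖ = 1 → ‖⟪T x, x⟫_𝕜‖ ≤ m) : ‖T‖ ≤ m := by
  rw [T.norm_eq_iSup_rayleighQuotient hT]
  refine ciSup_le fun x ↦ ?_
  rcases eq_or_ne x 0 with rfl | hx
  · simpa using hm
  have hc : (‖x‖⁻¹ : 𝕜) ≠ 0 := by simpa using hx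
  have hu : ‖(‖x‖⁻¹ : 𝕜) • x‖ = 1 := by simp [norm_smul, hx]
  rw [← T.rayleigh_smul x hc, rayleighQuotient, reApplyInnerSelf_apply, hu, one_pow, div_one]
  exact (RCLike.abs_re_le_norm _).trans (h _ hu)

theorem ContinuousLinearMap.sq_opNorm_le_of_forall_sq_norm_inner_le {T : E →L[𝕜] E}
    (hT : (T : E →ₗ[𝕜] E).IsSymmetric) {c : ℝ} (hc : 0 ≤ c)
    (h : ∀ x, ‖x‖ = 1 → ‖⟪T x, x⟫_𝕜‖ ^ 2 ≤ c) : ‖T‖ ^ 2 ≤ c := by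
  have hT := opNorm_le_of_forall_norm_inner_le hT (Real.sqrt_nonneg c)
    fun x hx ↦ Real.le_sqrt_of_sq_le (h x hx)
  exact (Real.le_sqrt (norm_nonneg T) hc).mp hT

end RCLike

section Complex

variable {H : Type*} [NormedAddCommGroup H] [InnerProductSpace ℂ H]

theorem norm_inner_apply_self_le_numRadius (A : H →L[ℂ] H) {x : H} (hx : ‖x‖ = 1) :
    ‖⟪A x, x⟫_ℂ‖ ≤ numRadius A :=
  le_csSup ⟨‖A‖, by rintro _ ⟨y, hy, rfl⟩; exact A.norm_inner_apply_self_le hy⟩ ⟨x, hx, rfl⟩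

theorem crawford_nonneg (A : H →L[ℂ] H) : 0 ≤ crawford A :=
  Real.sInf_nonneg <| by rintro _ ⟨x, -, rfl⟩; positivity

theorem crawford_le_norm_inner_apply_self (A : H →L[ℂ] H) {x : H} (hx : ‖x‖ = 1) :
    crawford A ≤ ‖⟪A x, x⟫_ℂ‖ :=
  csInf_le ⟨0, by rintro _ ⟨y, -, rfl⟩; positivity⟩ ⟨x, hx, rfl⟩

theorem crawford_eq_zero_of_forall_sq_add_sq_le [Nontrivial H] {S T : H →L[ℂ] H}
    (hT : (T : H →ₗ[ℂ] H).IsSymmetric)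
    (h : ∀ x, ‖x‖ = 1 → ‖⟪S x, x⟫_ℂ‖ ^ 2 + ‖⟪T x, x⟫_ℂ‖ ^ 2 ≤ ‖T‖ ^ 2) :
    crawford S = 0 := by
  have hS : ∀ x : H, ‖x‖ = 1 → crawford S ^ 2 ≤ ‖⟪S x, x⟫_ℂ‖ ^ 2 := fun x hx ↦
    pow_le_pow_left₀ (crawford_nonneg S) (crawford_le_norm_inner_apply_self S hx) 2
  obtain ⟨x₀, hx₀⟩ := exists_norm_eq H zero_le_one
  have hT' := sq_opNorm_le_of_forall_sq_norm_inner_le hT (c := ‖T‖ ^ 2 - crawford S ^ 2)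
    (by nlinarith [h x₀ hx₀, hS x₀ hx₀]) fun x hx ↦ by nlinarith [h x hx, hS x hx]
  exact pow_eq_zero_iff two_ne_zero |>.mp (by nlinarith [sq_nonneg (crawford S)])

theorem exists_seq_tendsto_norm_inner_zero [Nontrivial H] {S : H →L[ℂ] H} (hS : crawford S = 0) :
    ∃ x : ℕ → H, (∀ n, ‖x n‖ = 1) ∧ Tendsto (fun n ↦ ‖⟪S (x n), x n⟫_ℂ‖) atTop (𝓝 0) := by
  obtain ⟨x₀, hx₀⟩ := exists_norm_eq H zero_le_one
  have hsmall (n : ℕ) : ∃ x : H, ‖x‖ = 1 ∧ ‖⟪S x, x⟫_ℂ‖ < 1 / ((n : ℝ) + 1) := by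
    obtain ⟨_, ⟨x, hx, rfl⟩, hlt⟩ := exists_lt_of_csInf_lt
      (s := {r : ℝ | ∃ x : H, ‖x‖ = 1 ∧ r = ‖⟪S x, x⟫_ℂ‖}) ⟨_, x₀, hx₀, rfl⟩
      (hS.trans_lt Nat.one_div_pos_of_nat)
    exact ⟨x, hx, hlt⟩
  choose x hx hlt using hsmall
  exact ⟨x, hx, squeeze_zero (fun _ ↦ norm_nonneg _) (fun n ↦ (hlt n).le)
    tendsto_one_div_add_atTop_nhds_zero_nat⟩

theorem crawford_eq_zero_of_two_mul_le_norm_mul_self_add_mul_self [Nontrivial H]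
    {S T : H →L[ℂ] H} (hS : (S : H →ₗ[ℂ] H).IsSymmetric) (hT : (T : H →ₗ[ℂ] H).IsSymmetric)
    {c : ℝ} (h : ∀ x, ‖x‖ = 1 → ‖⟪S x, x⟫_ℂ‖ ^ 2 + ‖⟪T x, x⟫_ℂ‖ ^ 2 ≤ c)
    (hc : 2 * c ≤ ‖S * S + T * T‖) :
    crawford S = 0 ∧ crawford T = 0 := by
  obtain ⟨x₀, hx₀⟩ := exists_norm_eq H zero_le_one
  have hc₀ : 0 ≤ c := (by positivity : 0 ≤ ‖⟪S x₀, x₀⟫_ℂ‖ ^ 2 + ‖⟪T x₀, x₀⟫_ℂ‖ ^ 2).trans (h x₀ hx₀)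
  have hSc : ‖S‖ ^ 2 ≤ c := sq_opNorm_le_of_forall_sq_norm_inner_le hS hc₀ fun x hx ↦
    (le_add_of_nonneg_right (by positivity)).trans (h x hx)
  have hTc : ‖T‖ ^ 2 ≤ c := sq_opNorm_le_of_forall_sq_norm_inner_le hT hc₀ fun x hx ↦
    (le_add_of_nonneg_left (by positivity)).trans (h x hx)
  have hST : 2 * c ≤ ‖S‖ ^ 2 + ‖T‖ ^ 2 := by
    rw [sq, sq]
    linarith [norm_add_le (S * S) (T * T), norm_mul_le S S, norm_mul_le T T]
  exact ⟨crawford_eq_zero_of_forall_sq_add_sq_le hT fun x hx ↦ (h x hx).trans (by linarith),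
    crawford_eq_zero_of_forall_sq_add_sq_le hS fun x hx ↦
      (add_comm _ _).trans_le ((h x hx).trans (by linarith))⟩

theorem exists_seq_tendsto_norm_inner_of_crawford_add_eq_zero [Nontrivial H] {R J : H →L[ℂ] H}
    (h : crawford (R + J) = 0) :
    ∃ x : ℕ → H, (∀ n, ‖x n‖ = 1) ∧ ∃ L : ℝ,
      Tendsto (fun n ↦ ‖⟪R (x n), x n⟫_ℂ‖) atTop (𝓝 L) ∧
      Tendsto (fun n ↦ ‖⟪J (x n), x n⟫_ℂ‖) atTop (𝓝 L) := by
  obtain ⟨x, hx, hx0⟩ := exists_seq_tendsto_norm_inner_zero h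
  have hdiff (n : ℕ) :
      |‖⟪R (x n), x n⟫_ℂ‖ - ‖⟪J (x n), x n⟫_ℂ‖| ≤ ‖⟪(R + J) (x n), x n⟫_ℂ‖ := by
    simpa [inner_add_left] using abs_norm_sub_norm_le ⟪R (x n), x n⟫_ℂ (-⟪J (x n), x n⟫_ℂ)
  obtain ⟨φ, L, hRL, hJL⟩ := Real.exists_tendsto_comp_of_abs_sub_le
    (fun n ↦ (abs_norm _).trans_le (R.norm_inner_apply_self_le (hx n))) hdiff hx0
  exact ⟨x ∘ φ, fun n ↦ hx (φ n), L, hRL, hJL⟩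

variable [CompleteSpace H]

theorem reP_eq_realPart (A : H →L[ℂ] H) : reP A = ℜ A := by
  rw [realPart_apply_coe, ← Complex.coe_smul, Complex.ofReal_inv, Complex.ofReal_ofNat,
    star_eq_adjoint, reP]

theorem imP_eq_imaginaryPart (A : H →L[ℂ] H) : imP A = ℑ A := by
  rw [imaginaryPart_apply_coe, ← Complex.coe_smul, Complex.ofReal_inv, Complex.ofReal_ofNat,
    star_eq_adjoint, imP, smul_smul, mul_inv, Complex.inv_I, mul_comm]

theorem inner_realPart_apply_self (A : H →L[ℂ] H) (x : H) :
    ⟪(ℜ A : H →L[ℂ] H) x, x⟫_ℂ = (⟪A x, x⟫_ℂ).re := by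
  rw [realPart_apply_coe, smul_apply, RCLike.real_smul_eq_coe_smul (K := ℂ), inner_smul_left,
    add_apply, inner_add_left, star_eq_adjoint, adjoint_inner_left, ← inner_conj_symm x,
    Complex.add_conj]
  simp [map_ofNat]

-- The sign comes from `⟪·, ·⟫_ℂ` being conjugate-linear in its first argument.
theorem inner_imaginaryPart_apply_self (A : H →L[ℂ] H) (x : H) :
    ⟪(ℑ A : H →L[ℂ] H) x, x⟫_ℂ = -(⟪A x, x⟫_ℂ).im := by
  rw [imaginaryPart_apply_coe, smul_apply, smul_apply, RCLike.real_smul_eq_coe_smul (K := ℂ),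
    inner_smul_left, inner_smul_left, sub_apply, inner_sub_left, star_eq_adjoint,
    adjoint_inner_left, ← inner_conj_symm x, Complex.sub_conj]
  simp only [map_neg, Complex.conj_I, neg_neg, map_inv₀, map_ofNat, Complex.ofReal_mul,
    Complex.ofReal_ofNat]
  linear_combination ((⟪A x, x⟫_ℂ).im : ℂ) * Complex.I_sq

theorem sq_norm_inner_add_sq_norm_inner_sub (A : H →L[ℂ] H) (x : H) :
    ‖⟪(ℜ A + ℑ A : H →L[ℂ] H) x, x⟫_ℂ‖ ^ 2 + ‖⟪(ℜ A - ℑ A : H →L[ℂ] H) x, x⟫_ℂ‖ ^ 2 =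
      2 * ‖⟪A x, x⟫_ℂ‖ ^ 2 := by
  simp only [add_apply, sub_apply, inner_add_left, inner_sub_left, inner_realPart_apply_self,
    inner_imaginaryPart_apply_self, Complex.sq_norm, Complex.normSq_apply, Complex.add_re,
    Complex.ofReal_re, Complex.neg_re, Complex.add_im, Complex.ofReal_im, Complex.neg_im,
    Complex.sub_re, Complex.sub_im]
  ring

end Complex

theorem stmt10 {H : Type*} [NormedAddCommGroup H] [InnerProductSpace ℂ H]
    [CompleteSpace H] [Nontrivial H] (A : H →L[ℂ] H)
    (h : numRadius A ^ 2 = (1/4 : ℝ) * ‖adjoint A * A + A * adjoint A‖) :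
    crawford (reP A + imP A) = 0 ∧ crawford (reP A - imP A) = 0 ∧
    ∃ x : ℕ → H, (∀ n, ‖x n‖ = 1) ∧ ∃ L : ℝ,
      Filter.Tendsto (fun n => ‖⟪reP A (x n), x n⟫_ℂ‖) Filter.atTop (nhds L) ∧
      Filter.Tendsto (fun n => ‖⟪imP A (x n), x n⟫_ℂ‖) Filter.atTop (nhds L) := by
  rw [← star_eq_adjoint, star_mul_self_add_self_mul_star_eq_add_mul_self_add_sub_mul_self] at h
  rw [reP_eq_realPart, imP_eq_imaginaryPart]
  have hR : IsSelfAdjoint (ℜ A : H →L[ℂ] H) := (ℜ A).2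
  have hJ : IsSelfAdjoint (ℑ A : H →L[ℂ] H) := (ℑ A).2
  have hnum (x : H) (hx : ‖x‖ = 1) :
      ‖⟪(ℜ A + ℑ A : H →L[ℂ] H) x, x⟫_ℂ‖ ^ 2 + ‖⟪(ℜ A - ℑ A : H →L[ℂ] H) x, x⟫_ℂ‖ ^ 2 ≤
        2 * numRadius A ^ 2 := by
    rw [sq_norm_inner_add_sq_norm_inner_sub]
    gcongr
    exact norm_inner_apply_self_le_numRadius A hx
  obtain ⟨hcS, hcT⟩ := crawford_eq_zero_of_two_mul_le_norm_mul_self_add_mul_self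
    (hR.add hJ).isSymmetric (hR.sub hJ).isSymmetric hnum (by linarith)
  exact ⟨hcS, hcT, exists_seq_tendsto_norm_inner_of_crawford_add_eq_zero hcS⟩
end
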